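/- arXiv:2603.18455 — 2 statements merged into one kernel-verified Lean document; each statement's English description precedes it below -/
import Mathlib

section
/- The XOR-differential probability of addition modulo 2^n is monotonically non-increasing under bit extension: for differences a, b, c of n-bit words, if p_k denotes the differential probability DP(a[k-1:0], b[k-1:0] → c[k-1:0]) of addition modulo 2^k restricted to the k least-significant bits, then p_n ≤ p_{n-1} ≤ ... ≤ p_1 ≤ p_0 = 1. -/
instance (n : ℕ) : Fintype (BitVec n) :=
  Fintype.ofEquiv (Fin (2 ^ n)) ⟨BitVec.ofFin, BitVec.toFin, fun _ => rfl, fun _ => rfl⟩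

/-- XOR-differential probability of addition modulo `2^m`. -/
def DP (m : ℕ) (a b c : BitVec m) : ℚ :=
  ((Finset.univ.filter fun p : BitVec m × BitVec m =>
      ((p.1 ^^^ a) + (p.2 ^^^ b)) ^^^ (p.1 + p.2) = c).card : ℚ) / 2 ^ (2 * m)

lemma fiber_card (k : ℕ) (v : BitVec k) :
    (Finset.univ.filter fun x : BitVec (k+1) => x.setWidth k = v).card = 2 := by
  have h : (Finset.univ.filter fun x : BitVec (k+1) => x.setWidth k = v) =
      {BitVec.cons false v, BitVec.cons true v} := by
    ext x
    simp only [Finset.mem_filter, Finset.mem_univ, true_and, Finset.mem_insert,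
      Finset.mem_singleton]
    constructor
    · intro hx
      rcases hb : x.msb with _ | _
      · left; rw [← hx, ← hb, BitVec.cons_msb_setWidth]
      · right; rw [← hx, ← hb, BitVec.cons_msb_setWidth]
    · rintro (rfl | rfl) <;> simp
  rw [h, Finset.card_insert_of_notMem, Finset.card_singleton]
  simp only [Finset.mem_singleton]
  intro hcontra
  have := congrArg BitVec.msb hcontra
  simp at this

lemma card_bitvec (m : ℕ) : Fintype.card (BitVec m) = 2 ^ m :=
  (Fintype.card_congr ⟨BitVec.toFin, BitVec.ofFin, fun _ => rfl, fun _ => rfl⟩).trans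
    (Fintype.card_fin _)

/-- The XOR-differential probability of modular addition is monotonically
non-increasing under bit extension: `p_0 = 1` and `p_{k+1} ≤ p_k` for `k + 1 ≤ n`. -/
theorem dp_truncate_antitone (n : ℕ) (a b c : BitVec n) :
    DP 0 (a.truncate 0) (b.truncate 0) (c.truncate 0) = 1 ∧
    ∀ k : ℕ, k + 1 ≤ n →
      DP (k + 1) (a.truncate (k + 1)) (b.truncate (k + 1)) (c.truncate (k + 1)) ≤
        DP k (a.truncate k) (b.truncate k) (c.truncate k) := by
  constructor
  · unfold DP
    have hfil : (Finset.univ.filter fun p : BitVec 0 × BitVec 0 =>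
        ((p.1 ^^^ a.truncate 0) + (p.2 ^^^ b.truncate 0)) ^^^ (p.1 + p.2) = c.truncate 0) =
        Finset.univ := by
      refine Finset.filter_true_of_mem fun p _ => ?_
      exact Subsingleton.elim _ _
    rw [hfil]
    rw [Finset.card_univ, Fintype.card_prod, card_bitvec]
    norm_num
  · intro k hk
    unfold DP
    set S := Finset.univ.filter fun p : BitVec (k+1) × BitVec (k+1) =>
        ((p.1 ^^^ a.truncate (k+1)) + (p.2 ^^^ b.truncate (k+1))) ^^^ (p.1 + p.2)
          = c.truncate (k+1) with hS
    set T := Finset.univ.filter fun p : BitVec k × BitVec k =>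
        ((p.1 ^^^ a.truncate k) + (p.2 ^^^ b.truncate k)) ^^^ (p.1 + p.2) = c.truncate k with hT
    have hcard : S.card ≤ 4 * T.card := by
      apply Finset.card_le_mul_card_image_of_maps_to
        (f := fun p : BitVec (k+1) × BitVec (k+1) => (p.1.setWidth k, p.2.setWidth k))
      · intro p hp
        simp only [hS, Finset.mem_filter, Finset.mem_univ, true_and] at hp
        simp only [hT, Finset.mem_filter, Finset.mem_univ, true_and]
        have := congrArg (BitVec.setWidth k) hp
        simpa [BitVec.setWidth_xor, BitVec.setWidth_add _ _ (Nat.le_succ k),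
          BitVec.setWidth_setWidth_of_le _ (Nat.le_succ k),
          BitVec.truncate, Nat.le_of_succ_le hk, hk] using this
      · intro q hq
        calc (S.filter fun p => (p.1.setWidth k, p.2.setWidth k) = q).card
            ≤ ((Finset.univ.filter fun x : BitVec (k+1) => x.setWidth k = q.1) ×ˢ
               (Finset.univ.filter fun x : BitVec (k+1) => x.setWidth k = q.2)).card := by
              apply Finset.card_le_card
              intro p hp
              simp only [Finset.mem_filter, Finset.mem_univ, true_and, Prod.mk.injEq,
                Finset.mem_product] at hp ⊢
              exact ⟨congrArg Prod.fst hp.2, congrArg Prod.snd hp.2⟩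
          _ = 4 := by rw [Finset.card_product, fiber_card, fiber_card]
    have hpos : (0:ℚ) < 2 ^ (2 * k) := by positivity
    rw [div_le_div_iff₀ (by positivity) hpos]
    calc (S.card : ℚ) * 2 ^ (2 * k) ≤ (4 * T.card) * 2 ^ (2 * k) := by
          have : (S.card : ℚ) ≤ (4 * T.card : ℕ) := by exact_mod_cast hcard
          push_cast at this ⊢
          nlinarith
      _ = T.card * 2 ^ (2 * (k + 1)) := by ring
end

section
/- For the SIMON nonlinear function g(x) = (x <<< 1) & (x <<< 8) on n-bit words with a uniformly random input x, if the input difference Δ has Hamming weight 1, then the output difference g(x) ⊕ g(x ⊕ Δ) takes each value in a set of size at most 4, and the probability of any fixed output difference is a multiple of 1/4. -/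
/-- Hamming weight of an `n`-bit word. -/
def hw {n : ℕ} (x : BitVec n) : ℕ :=
  (Finset.univ.filter fun i : Fin n => x.getLsbD i).card

/-- The nonlinear part of the SIMON round function. -/
def simonG {n : ℕ} (x : BitVec n) : BitVec n :=
  (x.rotateLeft 1) &&& (x.rotateLeft 8)

lemma bv_card (n : ℕ) : Fintype.card (BitVec n) = 2 ^ n := by
  rw [Fintype.card_congr ⟨BitVec.toFin, BitVec.ofFin, fun _ => rfl, fun _ => rfl⟩]
  simp

lemma bv_xor_cancel {n : ℕ} (x c : BitVec n) : x ^^^ c ^^^ c = x := by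
  rw [BitVec.xor_assoc, BitVec.xor_self, BitVec.xor_zero]

lemma card_filter_xor {n : ℕ} (c : BitVec n) (P : BitVec n → Prop) [DecidablePred P] :
    (Finset.univ.filter P).card = (Finset.univ.filter fun x => P (x ^^^ c)).card := by
  refine Finset.card_bij' (fun x _ => x ^^^ c) (fun x _ => x ^^^ c) ?_ ?_ ?_ ?_ <;>
    intro x hx <;> simp only [Finset.mem_filter, Finset.mem_univ, true_and,
      bv_xor_cancel] at hx ⊢ <;> try exact hx
  all_goals exact bv_xor_cancel x c

/-- index of the bit of `x` that lands at position `p` after `rotateLeft r`. -/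
def rotIdx (n r p : ℕ) : ℕ := if p < r then n - r + p else p - r

lemma rot_bit {n : ℕ} (r p : ℕ) (hr : r < n) (hp : p < n) (y : BitVec n) :
    (y.rotateLeft r).getLsbD p = y.getLsbD (rotIdx n r p) := by
  rw [BitVec.getLsbD_rotateLeft, Nat.mod_eq_of_lt hr]
  by_cases h : p < r <;> simp [h, hp, rotIdx]

lemma rotIdx_lt {n r p : ℕ} (hp : p < n) : rotIdx n r p < n := by
  unfold rotIdx; split <;> omega

lemma rotIdx_eq_iff {n r p i : ℕ} (hr : r < n) (hp : p < n) (hi : i < n) :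
    rotIdx n r p = i ↔ p = (if i + r < n then i + r else i + r - n) := by
  unfold rotIdx; split_ifs <;> omega

lemma condbit {n : ℕ} (P : Bool) (y : BitVec n) (p : ℕ) :
    (cond P y 0#n).getLsbD p = (P && y.getLsbD p) := by
  cases P <;> simp

/-- one-bit fiber count -/
lemma fiber1_card {n : ℕ} (hn : 1 ≤ n) (a : ℕ) (ha : a < n) (p : Bool) :
    (Finset.univ.filter fun x : BitVec n => x.getLsbD a = p).card = 2 ^ (n - 1) := by
  have hswap : ∀ q : Bool,
      (Finset.univ.filter fun x : BitVec n => x.getLsbD a = q).card =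
      (Finset.univ.filter fun x : BitVec n => x.getLsbD a = false).card := by
    intro q
    cases q
    · rfl
    · rw [card_filter_xor (BitVec.twoPow n a) (fun x : BitVec n => x.getLsbD a = true)]
      congr 1
      apply Finset.filter_congr
      intro x _
      simp [BitVec.getLsbD_xor, BitVec.getLsbD_twoPow, ha]
  have hsum := Finset.card_eq_sum_card_fiberwise
    (f := fun x : BitVec n => x.getLsbD a) (s := Finset.univ) (t := Finset.univ)
    (fun x _ => Finset.mem_univ _)
  rw [Finset.card_univ, bv_card] at hsum
  rw [Fintype.sum_bool] at hsum
  rw [hswap true, hswap false] at hsum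
  have h2 : 2 ^ n = 2 * 2 ^ (n - 1) := by
    conv_lhs => rw [show n = 1 + (n - 1) by omega]
    rw [pow_add]; norm_num
  have := hswap p
  omega

/-- two-bit fiber count: always a multiple of `2 ^ (n-2)`. -/
lemma fiber2_card {n : ℕ} (hn : 2 ≤ n) (a b : ℕ) (ha : a < n) (hb : b < n) (p q : Bool) :
    ∃ m, (Finset.univ.filter fun x : BitVec n =>
      x.getLsbD a = p ∧ x.getLsbD b = q).card = m * 2 ^ (n - 2) := by
  by_cases hab : a = b
  · subst hab
    by_cases hpq : p = q
    · subst hpq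
      refine ⟨2, ?_⟩
      have : (Finset.univ.filter fun x : BitVec n => x.getLsbD a = p ∧ x.getLsbD a = p) =
          (Finset.univ.filter fun x : BitVec n => x.getLsbD a = p) := by
        apply Finset.filter_congr; intro x _; simp
      rw [this, fiber1_card (by omega) a ha p]
      have : n - 1 = 1 + (n - 2) := by omega
      rw [this, pow_add]; ring
    · refine ⟨0, ?_⟩
      rw [Finset.filter_false_of_mem, Finset.card_empty, Nat.zero_mul]
      intro x _
      rintro ⟨h1, h2⟩
      exact hpq (h1 ▸ h2 ▸ rfl)
  · -- a ≠ b : all four fibers have equal cardinality 2^(n-2)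
    have hswap : ∀ u v : Bool,
        (Finset.univ.filter fun x : BitVec n => x.getLsbD a = u ∧ x.getLsbD b = v).card =
        (Finset.univ.filter fun x : BitVec n =>
          x.getLsbD a = false ∧ x.getLsbD b = false).card := by
      intro u v
      rw [card_filter_xor ((cond u (BitVec.twoPow n a) 0#n) ^^^ (cond v (BitVec.twoPow n b) 0#n))
        (fun x : BitVec n => x.getLsbD a = u ∧ x.getLsbD b = v)]
      congr 1
      apply Finset.filter_congr
      intro x _
      have hba : b ≠ a := fun h => hab h.symm
      simp only [BitVec.getLsbD_xor, condbit, BitVec.getLsbD_twoPow, ha, hb, hab, hba,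
        decide_true, decide_false, Bool.and_true, Bool.and_false, Bool.xor_false,
        decide_eq_true_eq]
      cases u <;> cases v <;> simp [hab, hba] <;> (constructor <;> (rintro ⟨h1', h2'⟩ <;> simp_all))
    have hsum := Finset.card_eq_sum_card_fiberwise
      (f := fun x : BitVec n => (x.getLsbD a, x.getLsbD b)) (s := Finset.univ)
      (t := Finset.univ) (fun x _ => Finset.mem_univ _)
    rw [Finset.card_univ, bv_card] at hsum
    have heq : ∀ pq : Bool × Bool,
        (Finset.univ.filter fun x : BitVec n => (x.getLsbD a, x.getLsbD b) = pq).card =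
        (Finset.univ.filter fun x : BitVec n =>
          x.getLsbD a = false ∧ x.getLsbD b = false).card := by
      intro pq
      rw [show (Finset.univ.filter fun x : BitVec n => (x.getLsbD a, x.getLsbD b) = pq) =
          (Finset.univ.filter fun x : BitVec n =>
            x.getLsbD a = pq.1 ∧ x.getLsbD b = pq.2) from
        Finset.filter_congr fun x _ => by simp [Prod.ext_iff]]
      exact hswap pq.1 pq.2
    rw [Finset.sum_congr rfl (fun pq _ => heq pq), Finset.sum_const, Finset.card_univ] at hsum
    have hcard4 : Fintype.card (Bool × Bool) = 4 := by simp
    rw [hcard4, smul_eq_mul] at hsum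
    have h2 : 2 ^ n = 4 * 2 ^ (n - 2) := by
      conv_lhs => rw [show n = 2 + (n - 2) by omega]
      rw [pow_add]; norm_num
    refine ⟨1, ?_⟩
    rw [one_mul]
    have := hswap p q
    omega

lemma key_lemma {n : ℕ} (hn : 9 ≤ n) (Δ : BitVec n) (i : ℕ) (hi : i < n)
    (hbit : ∀ q : ℕ, Δ.getLsbD q = decide (q = i)) (x : BitVec n) :
    simonG x ^^^ simonG (x ^^^ Δ) =
      (cond (x.getLsbD (rotIdx n 1 (if i + 8 < n then i + 8 else i + 8 - n)))
        (Δ.rotateLeft 8) 0#n) ^^^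
      (cond (x.getLsbD (rotIdx n 8 (if i + 1 < n then i + 1 else i + 1 - n)))
        (Δ.rotateLeft 1) 0#n) ^^^
      ((Δ.rotateLeft 1) &&& (Δ.rotateLeft 8)) := by
  have h1 : (1:ℕ) < n := by omega
  have h8 : (8:ℕ) < n := by omega
  apply BitVec.eq_of_getLsbD_eq
  intro p hp
  simp only [simonG, BitVec.getLsbD_xor, BitVec.getLsbD_and, condbit,
    rot_bit 1 p h1 hp, rot_bit 8 p h8 hp, hbit]
  by_cases hv : rotIdx n 8 p = i
  · have hu : ¬ rotIdx n 1 p = i := by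
      intro hu
      rw [← hu] at hv
      unfold rotIdx at hv
      split_ifs at hv <;> omega
    have hpj : p = (if i + 8 < n then i + 8 else i + 8 - n) :=
      (rotIdx_eq_iff h8 hp hi).mp hv
    rw [← hpj, hv]
    simp only [hu, decide_eq_true_eq, decide_true, decide_false]
    cases hA : x.getLsbD (rotIdx n 1 p) <;> cases hB : x.getLsbD (rotIdx n 8 p) <;> simp
  · by_cases hu : rotIdx n 1 p = i
    · have hpj : p = (if i + 1 < n then i + 1 else i + 1 - n) :=
        (rotIdx_eq_iff h1 hp hi).mp hu
      rw [← hpj, hu]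
      simp only [hv, decide_eq_true_eq, decide_true, decide_false]
      cases hA : x.getLsbD (rotIdx n 1 p) <;> cases hB : x.getLsbD (rotIdx n 8 p) <;> simp
    · simp only [hu, hv, decide_false]
      cases hA : x.getLsbD (rotIdx n 1 p) <;> cases hB : x.getLsbD (rotIdx n 8 p) <;> simp

/-- For a single-bit input difference, the output difference of the SIMON
nonlinear function takes at most 4 values, and the probability (over uniform
`x`) of any fixed output difference is a multiple of `1/4`. -/
theorem simonG_single_bit_diff (n : ℕ) (hn : 9 ≤ n) (Δ : BitVec n) (hΔ : hw Δ = 1) :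
    (Finset.univ.image fun x : BitVec n => simonG x ^^^ simonG (x ^^^ Δ)).card ≤ 4 ∧
    ∀ d : BitVec n, ∃ m : ℕ,
      ((Finset.univ.filter fun x : BitVec n =>
          simonG x ^^^ simonG (x ^^^ Δ) = d).card : ℚ) / 2 ^ n = m * (1 / 4) := by
  -- extract the single-bit position
  obtain ⟨i0, hi0⟩ := Finset.card_eq_one.mp hΔ
  have hbit : ∀ q : ℕ, Δ.getLsbD q = decide (q = (i0 : ℕ)) := by
    intro q
    by_cases hq : q < n
    · have h := Finset.ext_iff.mp hi0 ⟨q, hq⟩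
      simp only [Finset.mem_filter, Finset.mem_univ, true_and, Finset.mem_singleton] at h
      cases hΔq : Δ.getLsbD q
      · rw [hΔq] at h
        simp only [Bool.false_eq_true, false_iff] at h
        have : ¬ q = (i0 : ℕ) := fun he => h (Fin.ext he)
        simp [this]
      · rw [hΔq] at h
        have : (⟨q, hq⟩ : Fin n) = i0 := h.mp rfl
        have hqe : q = (i0 : ℕ) := congrArg Fin.val this
        simp [hqe]
    · rw [BitVec.getLsbD_of_ge Δ q (by omega)]
      have : ¬ q = (i0 : ℕ) := by have := i0.isLt; omega
      simp [this]
  set i := (i0 : ℕ) with hidef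
  have hi : i < n := i0.isLt
  set a := rotIdx n 1 (if i + 8 < n then i + 8 else i + 8 - n) with hadef
  set b := rotIdx n 8 (if i + 1 < n then i + 1 else i + 1 - n) with hbdef
  have ha : a < n := rotIdx_lt (by split <;> omega)
  have hb : b < n := rotIdx_lt (by split <;> omega)
  set G : Bool → Bool → BitVec n := fun P Q =>
    (cond P (Δ.rotateLeft 8) 0#n) ^^^ (cond Q (Δ.rotateLeft 1) 0#n) ^^^
      ((Δ.rotateLeft 1) &&& (Δ.rotateLeft 8)) with hGdef
  have key : ∀ x : BitVec n, simonG x ^^^ simonG (x ^^^ Δ) = G (x.getLsbD a) (x.getLsbD b) :=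
    fun x => key_lemma hn Δ i hi hbit x
  constructor
  · -- image card ≤ 4
    have hsub : (Finset.univ.image fun x : BitVec n => simonG x ^^^ simonG (x ^^^ Δ)) ⊆
        (Finset.univ.image fun pq : Bool × Bool => G pq.1 pq.2) := by
      intro d hd
      obtain ⟨x, _, hx⟩ := Finset.mem_image.mp hd
      exact Finset.mem_image.mpr ⟨(x.getLsbD a, x.getLsbD b), Finset.mem_univ _,
        by rw [← hx, key]⟩
    calc (Finset.univ.image fun x : BitVec n => simonG x ^^^ simonG (x ^^^ Δ)).card
        ≤ (Finset.univ.image fun pq : Bool × Bool => G pq.1 pq.2).card :=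
          Finset.card_le_card hsub
      _ ≤ (Finset.univ : Finset (Bool × Bool)).card := Finset.card_image_le
      _ = 4 := by simp
  · intro d
    -- fiberwise decomposition
    have hdecomp := Finset.card_eq_sum_card_fiberwise
      (f := fun x : BitVec n => (x.getLsbD a, x.getLsbD b))
      (s := Finset.univ.filter fun x : BitVec n => simonG x ^^^ simonG (x ^^^ Δ) = d)
      (t := Finset.univ.filter fun pq : Bool × Bool => G pq.1 pq.2 = d)
      (by
        intro x hx
        simp only [Finset.mem_coe, Finset.mem_filter, Finset.mem_univ, true_and] at hx ⊢
        rw [← hx, key])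
    have hfib : ∀ pq : Bool × Bool,
        ∃ m, ((Finset.univ.filter fun x : BitVec n => simonG x ^^^ simonG (x ^^^ Δ) = d).filter
          fun x => (x.getLsbD a, x.getLsbD b) = pq).card = m * 2 ^ (n - 2) := by
      intro pq
      by_cases hpq : G pq.1 pq.2 = d
      case neg =>
        refine ⟨0, ?_⟩
        rw [Finset.filter_filter, Finset.filter_false_of_mem, Finset.card_empty, Nat.zero_mul]
        rintro x _ ⟨h1', h2'⟩
        apply hpq
        rw [← h1', key]
        have e1 : x.getLsbD a = pq.1 := by rw [← h2']
        have e2 : x.getLsbD b = pq.2 := by rw [← h2']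
        rw [e1, e2]
      have heq : ((Finset.univ.filter fun x : BitVec n =>
          simonG x ^^^ simonG (x ^^^ Δ) = d).filter
          fun x => (x.getLsbD a, x.getLsbD b) = pq) =
          (Finset.univ.filter fun x : BitVec n =>
            x.getLsbD a = pq.1 ∧ x.getLsbD b = pq.2) := by
        rw [Finset.filter_filter]
        apply Finset.filter_congr
        intro x _
        constructor
        · rintro ⟨_, h2⟩
          exact ⟨by rw [← h2], by rw [← h2]⟩
        · rintro ⟨h1, h2⟩
          refine ⟨?_, by cases pq; simp_all⟩
          rw [key, h1, h2, ← hpq]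
      rw [heq]
      exact fiber2_card (by omega) a b ha hb pq.1 pq.2
    choose mf hmf using hfib
    rw [Finset.sum_congr rfl (fun pq _ => hmf pq), ← Finset.sum_mul] at hdecomp
    refine ⟨∑ pq ∈ (Finset.univ.filter fun pq : Bool × Bool => G pq.1 pq.2 = d), mf pq, ?_⟩
    rw [hdecomp]
    have h2n : (2:ℚ) ^ n = 2 ^ (n - 2) * 4 := by
      conv_lhs => rw [show n = n - 2 + 2 by omega]
      rw [pow_add]; norm_num
    push_cast
    rw [h2n]
    have hne : (2:ℚ) ^ (n - 2) ≠ 0 := by positivity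
    field_simp
end
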